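/- If X is a strongly star-Lindelöf space and X is the union of fewer than 𝔟 many Hurewicz subspaces, then X is strongly star-Hurewicz. -/

import Mathlib

open Set Filter Topology

/-- `𝒰` is an open cover of the space `X`. -/
def IsOpenCover {X : Type} [TopologicalSpace X] (𝒰 : Set (Set X)) : Prop :=
  (∀ u ∈ 𝒰, IsOpen u) ∧ ⋃₀ 𝒰 = Set.univ

/-- The star of a set `A` with respect to a collection `𝒰`. -/
def st {X : Type} (A : Set X) (𝒰 : Set (Set X)) : Set X :=
  ⋃₀ {u ∈ 𝒰 | (u ∩ A).Nonempty}
/-- Eventual domination `f ≤* g`. -/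
def EvLE (f g : ℕ → ℕ) : Prop := ∀ᶠ n in Filter.atTop, f n ≤ g n

/-- The dominating number `𝔡`. -/
noncomputable def dominatingNumber : Cardinal :=
  sInf {c | ∃ D : Set (ℕ → ℕ),
    (∀ g : ℕ → ℕ, ∃ f ∈ D, EvLE g f) ∧ Cardinal.mk D = c}

/-- The bounding number `𝔟`. -/
noncomputable def boundingNumber : Cardinal :=
  sInf {c | ∃ B : Set (ℕ → ℕ),
    (¬ ∃ g : ℕ → ℕ, ∀ f ∈ B, EvLE f g) ∧ Cardinal.mk B = c}
/-- The Menger property `S_fin(𝒪,𝒪)`. -/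
def MengerSpace (X : Type) [TopologicalSpace X] : Prop :=
  ∀ 𝒰 : ℕ → Set (Set X), (∀ n, IsOpenCover (𝒰 n)) →
    ∃ 𝒱 : ℕ → Set (Set X), (∀ n, (𝒱 n).Finite ∧ 𝒱 n ⊆ 𝒰 n) ∧
      ∀ x : X, ∃ n, x ∈ ⋃₀ 𝒱 n

/-- The Hurewicz property. -/
def HurewiczSpace (X : Type) [TopologicalSpace X] : Prop :=
  ∀ 𝒰 : ℕ → Set (Set X), (∀ n, IsOpenCover (𝒰 n)) →
    ∃ 𝒱 : ℕ → Set (Set X), (∀ n, (𝒱 n).Finite ∧ 𝒱 n ⊆ 𝒰 n) ∧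
      ∀ x : X, ∀ᶠ n in Filter.atTop, x ∈ ⋃₀ 𝒱 n

/-- The star-Menger property. -/
def StarMengerSpace (X : Type) [TopologicalSpace X] : Prop :=
  ∀ 𝒰 : ℕ → Set (Set X), (∀ n, IsOpenCover (𝒰 n)) →
    ∃ 𝒱 : ℕ → Set (Set X), (∀ n, (𝒱 n).Finite ∧ 𝒱 n ⊆ 𝒰 n) ∧
      ∀ x : X, ∃ n, x ∈ st (⋃₀ 𝒱 n) (𝒰 n)

/-- The star-Hurewicz property. -/
def StarHurewiczSpace (X : Type) [TopologicalSpace X] : Prop :=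
  ∀ 𝒰 : ℕ → Set (Set X), (∀ n, IsOpenCover (𝒰 n)) →
    ∃ 𝒱 : ℕ → Set (Set X), (∀ n, (𝒱 n).Finite ∧ 𝒱 n ⊆ 𝒰 n) ∧
      ∀ x : X, ∀ᶠ n in Filter.atTop, x ∈ st (⋃₀ 𝒱 n) (𝒰 n)

/-- The strongly star-Menger property. -/
def StronglyStarMengerSpace (X : Type) [TopologicalSpace X] : Prop :=
  ∀ 𝒰 : ℕ → Set (Set X), (∀ n, IsOpenCover (𝒰 n)) →
    ∃ F : ℕ → Set X, (∀ n, (F n).Finite) ∧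
      ∀ x : X, ∃ n, x ∈ st (F n) (𝒰 n)

/-- The strongly star-Hurewicz property. -/
def StronglyStarHurewiczSpace (X : Type) [TopologicalSpace X] : Prop :=
  ∀ 𝒰 : ℕ → Set (Set X), (∀ n, IsOpenCover (𝒰 n)) →
    ∃ F : ℕ → Set X, (∀ n, (F n).Finite) ∧
      ∀ x : X, ∀ᶠ n in Filter.atTop, x ∈ st (F n) (𝒰 n)

/-- The star-Lindelöf property. -/
def StarLindelofSpace (X : Type) [TopologicalSpace X] : Prop :=
  ∀ 𝒰 : Set (Set X), IsOpenCover 𝒰 →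
    ∃ 𝒱 ⊆ 𝒰, 𝒱.Countable ∧ st (⋃₀ 𝒱) 𝒰 = Set.univ

/-- The strongly star-Lindelöf property. -/
def StronglyStarLindelofSpace (X : Type) [TopologicalSpace X] : Prop :=
  ∀ 𝒰 : Set (Set X), IsOpenCover 𝒰 →
    ∃ C : Set X, C.Countable ∧ st C 𝒰 = Set.univ

/-!
Enumerate a countable set `C n` with `St(C n, 𝒰 n) = X` as an increasing union of finite sets
`F n k`; the stars `St(F n k, 𝒰 n)` form, for each `n`, an increasing open cover of `X`. On each
Hurewicz piece `Y i` this yields `f i : ℕ → ℕ` such that every point of `Y i` lies in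
`St(F n (f i n), 𝒰 n)` for almost all `n`. Fewer than `𝔟` functions have a common
`≤*`-bound `g`, and `F n (g n)` then works for all of `X`.
-/

theorem Set.Finite.exists_sUnion_subset_of_subset_range {α ι : Type*} [Preorder ι]
    [IsDirectedOrder ι] [Nonempty ι] {V : ι → Set α} (hV : Monotone V) {𝒱 : Set (Set α)}
    (hfin : 𝒱.Finite) (hsub : 𝒱 ⊆ range V) : ∃ m, ⋃₀ 𝒱 ⊆ V m := by
  choose! k hk using hsub
  obtain ⟨m, hm⟩ := (hfin.image k).exists_le
  exact ⟨m, sUnion_subset fun v hv => hk hv ▸ hV (hm _ (mem_image_of_mem k hv))⟩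

theorem Set.Countable.exists_monotone_finite_iUnion_eq {α : Type*} {C : Set α}
    (hC : C.Countable) : ∃ F : ℕ → Set α, Monotone F ∧ (∀ k, (F k).Finite) ∧ ⋃ k, F k = C := by
  rcases C.eq_empty_or_nonempty with rfl | hne
  · exact ⟨fun _ => ∅, monotone_const, fun _ => finite_empty, iUnion_empty⟩
  obtain ⟨c, rfl⟩ := hC.exists_eq_range hne
  refine ⟨fun k => c '' Iic k, fun a b hab => image_mono (Iic_subset_Iic.2 hab),
    fun k => (finite_Iic k).image c, ?_⟩
  simp_rw [← image_iUnion, iUnion_Iic, image_univ]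

section Star

variable {X : Type} {𝒰 : Set (Set X)}

theorem st_mono : Monotone fun A : Set X => st A 𝒰 :=
  fun _ _ hAB => sUnion_subset_sUnion fun _ ⟨hu, hne⟩ =>
    ⟨hu, hne.mono (inter_subset_inter_right _ hAB)⟩

theorem st_iUnion {ι : Sort*} (A : ι → Set X) : st (⋃ i, A i) 𝒰 = ⋃ i, st (A i) 𝒰 := by
  ext x
  simp only [st, mem_sUnion, mem_iUnion, mem_ofPred_eq, inter_iUnion, nonempty_iUnion]
  constructor
  · rintro ⟨u, ⟨hu, i, hi⟩, hx⟩
    exact ⟨i, u, ⟨hu, hi⟩, hx⟩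
  · rintro ⟨i, u, ⟨hu, hi⟩, hx⟩
    exact ⟨u, ⟨hu, i, hi⟩, hx⟩

theorem isOpen_st [TopologicalSpace X] (h𝒰 : ∀ u ∈ 𝒰, IsOpen u) (A : Set X) :
    IsOpen (st A 𝒰) :=
  isOpen_sUnion fun u hu => h𝒰 u hu.1

end Star

theorem HurewiczSpace.exists_eventually_mem {X : Type} [TopologicalSpace X]
    (hX : HurewiczSpace X) {W : ℕ → ℕ → Set X} (hopen : ∀ n k, IsOpen (W n k))
    (hmono : ∀ n, Monotone (W n)) (hcov : ∀ n, ⋃ k, W n k = univ) :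
    ∃ f : ℕ → ℕ, ∀ x, ∀ᶠ n in atTop, x ∈ W n (f n) := by
  obtain ⟨𝒱, h𝒱, hx𝒱⟩ := hX (fun n => range (W n))
    fun n => ⟨forall_mem_range.2 (hopen n), sUnion_range (W n) ▸ hcov n⟩
  choose f hf using fun n => (h𝒱 n).1.exists_sUnion_subset_of_subset_range (hmono n) (h𝒱 n).2
  exact ⟨f, fun x => (hx𝒱 x).mono fun n hn => hf n hn⟩

theorem StronglyStarLindelofSpace.exists_monotone_finite_iUnion_st_eq_univ {X : Type}
    [TopologicalSpace X] (hX : StronglyStarLindelofSpace X) {𝒰 : Set (Set X)}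
    (h𝒰 : IsOpenCover 𝒰) :
    ∃ F : ℕ → Set X, Monotone F ∧ (∀ k, (F k).Finite) ∧ ⋃ k, st (F k) 𝒰 = univ := by
  obtain ⟨C, hC, hCst⟩ := hX 𝒰 h𝒰
  obtain ⟨F, hFmono, hFfin, rfl⟩ := hC.exists_monotone_finite_iUnion_eq
  exact ⟨F, hFmono, hFfin, st_iUnion F ▸ hCst⟩

theorem exists_evLE_of_mk_lt_boundingNumber {ι : Type} (f : ι → ℕ → ℕ)
    (h : Cardinal.mk ι < boundingNumber) : ∃ g, ∀ i, EvLE (f i) g := by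
  by_contra! hunb
  refine h.not_ge (le_trans (b := Cardinal.mk (range f))
    (csInf_le' ⟨range f, ?_, rfl⟩) Cardinal.mk_range_le)
  rintro ⟨g, hg⟩
  obtain ⟨i, hi⟩ := hunb g
  exact hi (hg _ ⟨i, rfl⟩)

theorem stmt (X : Type) [TopologicalSpace X] (hX : StronglyStarLindelofSpace X)
    (ι : Type) (Y : ι → Set X)
    (hcard : Cardinal.mk ι < boundingNumber)
    (hY : ∀ i, HurewiczSpace (Y i))
    (hcover : ⋃ i, Y i = Set.univ) :
    StronglyStarHurewiczSpace X := by
  intro 𝒰 h𝒰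
  choose F hFmono hFfin hFcov using fun n =>
    hX.exists_monotone_finite_iUnion_st_eq_univ (h𝒰 n)
  have hbound : ∀ i, ∃ f : ℕ → ℕ, ∀ y ∈ Y i, ∀ᶠ n in atTop, y ∈ st (F n (f n)) (𝒰 n) := by
    intro i
    obtain ⟨f, hf⟩ := (hY i).exists_eventually_mem
      (W := fun n k => Subtype.val ⁻¹' st (F n k) (𝒰 n))
      (fun n k => (isOpen_st (h𝒰 n).1 _).preimage continuous_subtype_val)
      (fun n _ _ hkl => preimage_mono (st_mono (hFmono n hkl)))
      (fun n => by rw [← preimage_iUnion, hFcov n, preimage_univ])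
    exact ⟨f, fun y hy => hf ⟨y, hy⟩⟩
  choose f hf using hbound
  obtain ⟨g, hg⟩ := exists_evLE_of_mk_lt_boundingNumber f hcard
  refine ⟨fun n => F n (g n), fun n => hFfin n _, fun x => ?_⟩
  obtain ⟨i, hi⟩ := mem_iUnion.1 (hcover ▸ mem_univ x)
  filter_upwards [hf i x hi, hg i] with n hx hle
  exact st_mono (hFmono n hle) hx
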